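/- arXiv:1103.3180 — 3 statements merged into one kernel-verified Lean document; each statement's English description precedes it below -/
import Mathlib

section
/- Fix a lattice N (a finitely generated free abelian group), a genus g ∈ ℕ, a bound r ∈ ℕ, and degree data consisting of finitely many pairs (n_1,d_1),…,(n_s,d_s) with the n_k pairwise distinct primitive elements of N and the d_k positive integers. Then there are only finitely many combinatorial types of stable N_ℝ-parameterized tropical curves (Γ, h_Γ) of genus g and of the given degree that have fewer than r infinite vertices: there exists a finite list of pairs (finite graph with a partition of its vertices into finite and infinite ones, labelling of each edge by a subgroup of N) such that every such parameterized tropical curve has its combinatorial type isomorphic (as a labelled graph) to one in the list. -/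
open scoped TensorProduct

/-! # STATEMENT 0 (Lemma 2.6 of the paper)

Finiteness of the combinatorial types of stable `N_ℝ`-parameterized tropical curves
of fixed genus and degree with a bounded number of infinite vertices.

Here `N` is a lattice (a finitely generated free abelian group), and
`N_ℝ := ℝ ⊗[ℤ] N`.  A parameterized tropical curve is modelled as a finite graph
(loops and parallel edges allowed, each edge oriented with finite source, and with
the infinite vertex of each unbounded edge as target), with a positive length on
every bounded edge, a map `h` on vertices into `N_ℝ`, and a lattice vector `ev e ∈ N`
for each edge: for an unbounded edge it is `h` of its infinite vertex, and for a
bounded edge `e` from `v` to `v'` it is `(1/|e|)·(h v' - h v)`.  Infinite vertices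
have valency 1 and the balancing condition holds at every finite vertex.  Note that
`ev e` is exactly `l(e)·n_e` (multiplicity times distinguished generator of the
slope), so the label `l(e)·N_e ⊆ N` of the combinatorial type is the subgroup
`ℤ·(ev e) = AddSubgroup.zmultiples (ev e)`. -/

/-- The canonical embedding `N → ℝ ⊗[ℤ] N = N_ℝ`, `n ↦ 1 ⊗ n`. -/
noncomputable def latticeEmb (N : Type*) [AddCommGroup N] : N →+ (ℝ ⊗[ℤ] N) where
  toFun n := (1 : ℝ) ⊗ₜ[ℤ] n
  map_zero' := TensorProduct.tmul_zero _ _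
  map_add' x y := TensorProduct.tmul_add _ x y

/-- An element of a lattice is primitive if it is nonzero and is not a nontrivial
integer multiple of another lattice element. -/
def IsPrimitiveVec {N : Type*} [AddCommGroup N] (n : N) : Prop :=
  n ≠ 0 ∧ ∀ (c : ℤ) (m : N), c • m = n → IsUnit c

/-- An `N_ℝ`-parameterized tropical curve (with the combinatorially irrelevant data
of the total order on the infinite vertices omitted).  Vertices `v` with `inf v` are
the infinite ones; every edge has a finite source, an edge is unbounded iff its
target is infinite, `len` records the (positive) lengths of the bounded edges, `h`
is the parameterization map on vertices and `ev` the associated lattice vectors of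
the edges, as explained above. -/
structure ParamTropCurve (N : Type*) [AddCommGroup N] : Type _ where
  /-- the vertices -/
  V : Type
  /-- the edges -/
  E : Type
  fintypeV : Fintype V
  fintypeE : Fintype E
  /-- the source of an edge (always a finite vertex) -/
  src : E → V
  /-- the target of an edge; unbounded edges are those whose target is infinite -/
  tgt : E → V
  /-- the predicate singling out the infinite vertices -/
  inf : V → Prop
  /-- the length of a (bounded) edge -/
  len : E → ℝ
  /-- the parameterization map on vertices -/
  h : V → ℝ ⊗[ℤ] N
  /-- the lattice vector of an edge: `l(e)·n_e`, oriented from source to target -/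
  ev : E → N
  src_finite : ∀ e, ¬ inf (src e)
  /-- every infinite vertex has valency one (it is hit by exactly one edge, and by
  `src_finite` it is the source of none); the unique edge at it is unbounded and
  connects it to a finite vertex (its source). -/
  inf_valency : ∀ v, inf v → Nat.card {e : E // tgt e = v} = 1
  /-- `h` takes infinite vertices into `N ⊆ N_ℝ`, and the vector of an unbounded
  edge is `h` of its infinite vertex -/
  ev_unbounded : ∀ e, inf (tgt e) → latticeEmb N (ev e) = h (tgt e)
  /-- the vector of a bounded edge `e` is `(1/|e|)·(h (tgt e) - h (src e))`, and it
  lies in `N ⊆ N_ℝ` -/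
  ev_bounded : ∀ e, ¬ inf (tgt e) → len e • latticeEmb N (ev e) = h (tgt e) - h (src e)
  /-- bounded edges have positive length -/
  len_pos : ∀ e, ¬ inf (tgt e) → 0 < len e
  /-- the balancing condition at every finite vertex -/
  balanced : ∀ v, ¬ inf v →
    (∑ᶠ e ∈ {e : E | src e = v}, latticeEmb N (ev e)) =
      ∑ᶠ e ∈ {e : E | ¬ inf (tgt e) ∧ tgt e = v}, latticeEmb N (ev e)

attribute [instance] ParamTropCurve.fintypeV ParamTropCurve.fintypeE

namespace ParamTropCurve

variable {N : Type*} [AddCommGroup N]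

/-- A parameterized tropical curve is stable if every finite vertex has valency at
least 3 (a loop at a vertex counting twice). -/
def Stable (Γ : ParamTropCurve N) : Prop :=
  ∀ v, ¬ Γ.inf v →
    3 ≤ Nat.card {e : Γ.E // Γ.src e = v} + Nat.card {e : Γ.E // Γ.tgt e = v}

/-- The genus of a tropical curve is `1 - |V(Γ)| + |E(Γ)|`. -/
def HasGenus (Γ : ParamTropCurve N) (g : ℕ) : Prop :=
  Fintype.card Γ.E + 1 = Fintype.card Γ.V + g

/-- `Γ` has degree `{(n i, dd i)}_{i : ι}`: the nonzero vector of every unbounded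
edge is a positive multiple of some `n i` (so the `n i` are exactly the distinguished
generators of the slopes of the unbounded edges, the `n i` being primitive and the
`dd i` positive), and for each `i` the multiplicities `l(e)` of the unbounded edges
`e` with `n_e = n i` add up to `dd i`; since `ev e = l(e) • n i` for those edges,
this is expressed by summing the vectors `ev e` themselves. -/
def HasDegree (Γ : ParamTropCurve N) {ι : Type*} (n : ι → N) (dd : ι → ℕ) : Prop :=
  (∀ e, Γ.inf (Γ.tgt e) →
      Γ.ev e = 0 ∨ ∃ (i : ι) (c : ℕ), 0 < c ∧ Γ.ev e = (c : ℤ) • n i) ∧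
  ∀ i : ι, (dd i : ℤ) • n i =
    ∑ᶠ e ∈ {e : Γ.E | Γ.inf (Γ.tgt e) ∧ ∃ c : ℕ, 0 < c ∧ Γ.ev e = (c : ℤ) • n i},
      Γ.ev e

end ParamTropCurve

/-- A finite graph (with vertices partitioned into finite and infinite ones, edges
oriented) whose edges are labelled by subgroups of the lattice `N`: the data
recording the combinatorial type of a parameterized tropical curve. -/
structure LabeledGraph (N : Type*) [AddCommGroup N] : Type _ where
  /-- the vertices -/
  V : Type
  /-- the edges -/
  E : Type
  fintypeV : Fintype V
  fintypeE : Fintype E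
  /-- the source of an edge -/
  src : E → V
  /-- the target of an edge -/
  tgt : E → V
  /-- the predicate singling out the infinite vertices -/
  inf : V → Prop
  /-- the label of an edge: a subgroup of `N` -/
  lab : E → AddSubgroup N

attribute [instance] LabeledGraph.fintypeV LabeledGraph.fintypeE

/-- An isomorphism of labelled graphs: bijections on vertices and edges respecting
the partition into finite and infinite vertices, the labels, and the incidences
(edges being unoriented, an edge may be matched with either orientation). -/
def LabeledGraph.Iso {N : Type*} [AddCommGroup N] (G G' : LabeledGraph N) : Prop :=
  ∃ (φ : G.V ≃ G'.V) (ψ : G.E ≃ G'.E),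
    (∀ v, G'.inf (φ v) ↔ G.inf v) ∧
    (∀ e, G'.lab (ψ e) = G.lab e) ∧
    (∀ e, (G'.src (ψ e) = φ (G.src e) ∧ G'.tgt (ψ e) = φ (G.tgt e)) ∨
          (G'.src (ψ e) = φ (G.tgt e) ∧ G'.tgt (ψ e) = φ (G.src e)))

/-- The combinatorial type of a parameterized tropical curve: its underlying graph,
with each edge `e` labelled by the subgroup `l(e)·N_e = ℤ·(ev e)` of `N`. -/
def ParamTropCurve.ctype {N : Type*} [AddCommGroup N] (Γ : ParamTropCurve N) :
    LabeledGraph N where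
  V := Γ.V
  E := Γ.E
  fintypeV := Γ.fintypeV
  fintypeE := Γ.fintypeE
  src := Γ.src
  tgt := Γ.tgt
  inf := Γ.inf
  lab e := AddSubgroup.zmultiples (Γ.ev e)

/-! The vector `ev e` of an edge is bounded in terms of the degree. Project along an
ℝ-linear functional `Φ` on `N_ℝ` and cut the graph at a level set of `Φ ∘ h`, through
the source of a given bounded edge: by balancing, the total projected flow leaving the
set `T` of finite vertices below that level vanishes. Bounded edges leaving `T` point
upwards and bounded edges entering it point downwards, so all of them contribute with
the same sign, and their total is compensated by the unbounded edges alone, whose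
projections are controlled by the degree. Bounding every coordinate of every `ev e`
this way leaves finitely many possible labels. Finally, counting edge ends at finite
vertices, stability gives `3 · #finite ≤ 2 · #E - #infinite`, which with
`#E + 1 = #V + g` bounds the numbers of vertices and edges. -/

open Finset

lemma sum_abs_eq_abs_sum_of_forall_eq_nsmul {ι M : Type*} [AddCommGroup M] [LinearOrder M]
    [IsOrderedAddMonoid M] {s : Finset ι} {a : ι → M} (y : M)
    (ha : ∀ i ∈ s, ∃ c : ℕ, a i = c • y) :
    ∑ i ∈ s, |a i| = |∑ i ∈ s, a i| := by
  rcases le_total 0 y with hy | hy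
  · have hnonneg : ∀ i ∈ s, 0 ≤ a i := fun i hi => by
      obtain ⟨c, hc⟩ := ha i hi
      exact hc ▸ nsmul_nonneg hy c
    rw [abs_sum_of_nonneg hnonneg]
    exact sum_congr rfl fun i hi => abs_of_nonneg (hnonneg i hi)
  · have hnonpos : ∀ i ∈ s, a i ≤ 0 := fun i hi => by
      obtain ⟨c, hc⟩ := ha i hi
      exact hc ▸ nsmul_nonpos hy c
    rw [abs_of_nonpos (sum_nonpos hnonpos), ← sum_neg_distrib]
    exact sum_congr rfl fun i hi => abs_of_nonpos (hnonpos i hi)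

lemma Finset.filter_comp_and_eq_filter {α β : Type*} [DecidableEq β] {f : α → β}
    {p : β → Prop} [DecidablePred p] {b : β} (hb : p b) (s : Finset α) :
    {a ∈ s | p (f a) ∧ f a = b} = {a ∈ s | f a = b} :=
  filter_congr fun _ _ => and_iff_right_of_imp fun h => h ▸ hb

lemma Module.Basis.finite_setOf_abs_repr_le {κ N : Type*} [Finite κ] [AddCommGroup N]
    (b : Module.Basis κ ℤ N) (D : κ → ℤ) :
    {m : N | ∀ k, |b.repr m k| ≤ D k}.Finite := by
  have hbox : {m : N | ∀ k, |b.repr m k| ≤ D k} =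
      b.equivFun ⁻¹' Set.univ.pi fun k => Set.Icc (-D k) (D k) := by
    ext m
    simp only [Set.mem_ofPred_eq, Set.mem_preimage, Set.mem_univ_pi, Set.mem_Icc,
      Module.Basis.equivFun_apply, abs_le]
  rw [hbox]
  exact (Set.Finite.pi fun k => Set.finite_Icc _ _).preimage b.equivFun.injective.injOn

namespace LabeledGraph

variable {N : Type*} [AddCommGroup N]

lemma exists_list_iso_of_card_le (a b : ℕ) {S : Set (AddSubgroup N)} (hS : S.Finite) :
    ∃ L : List (LabeledGraph N), ∀ G : LabeledGraph N, Fintype.card G.V ≤ a →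
      Fintype.card G.E ≤ b → (∀ e, G.lab e ∈ S) → ∃ G' ∈ L, G.Iso G' := by
  have := hS.to_subtype
  let P := Σ (a' : Fin (a + 1)) (b' : Fin (b + 1)),
    (Fin b' → Fin a') × (Fin b' → Fin a') × (Fin a' → Prop) × (Fin b' → S)
  let mk : P → LabeledGraph N := fun p =>
    ⟨Fin p.1, Fin p.2.1, inferInstance, inferInstance, p.2.2.1, p.2.2.2.1, p.2.2.2.2.1,
      fun e => p.2.2.2.2.2 e⟩
  refine ⟨(Set.finite_range mk).toFinset.toList, fun G ha hb hlab => ?_⟩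
  let eV := Fintype.equivFin G.V
  let eE := Fintype.equivFin G.E
  refine ⟨mk ⟨⟨_, Nat.lt_succ_of_le ha⟩, ⟨_, Nat.lt_succ_of_le hb⟩, eV ∘ G.src ∘ eE.symm,
    eV ∘ G.tgt ∘ eE.symm, G.inf ∘ eV.symm, fun x => ⟨G.lab (eE.symm x), hlab _⟩⟩,
    by simp, eV, eE, fun v => ?_, fun e => ?_, fun e => Or.inl ?_⟩ <;> simp [mk]

end LabeledGraph

namespace ParamTropCurve

open scoped Classical

variable {N : Type*} [AddCommGroup N] (Γ : ParamTropCurve N)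

lemma sum_ev_src_mem_eq_sum_ev_tgt_mem (T : Finset Γ.V) (hT : ∀ v ∈ T, ¬ Γ.inf v) :
    ∑ e with Γ.src e ∈ T, latticeEmb N (Γ.ev e) =
      ∑ e with Γ.tgt e ∈ T, latticeEmb N (Γ.ev e) := by
  rw [← sum_fiberwise_eq_sum_filter, ← sum_fiberwise_eq_sum_filter]
  refine sum_congr rfl fun v hv => ?_
  have hbal := Γ.balanced v (hT v hv)
  rw [finsum_mem_eq_toFinset_sum, finsum_mem_eq_toFinset_sum, Set.toFinset_ofPred,
    Set.toFinset_ofPred, filter_comp_and_eq_filter (p := fun v => ¬ Γ.inf v) (hT v hv)]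
    at hbal
  exact hbal

lemma apply_h_tgt_sub_apply_h_src (Φ : ℝ ⊗[ℤ] N →ₗ[ℝ] ℝ) {e : Γ.E}
    (he : ¬ Γ.inf (Γ.tgt e)) :
    Φ (Γ.h (Γ.tgt e)) - Φ (Γ.h (Γ.src e)) = Γ.len e * Φ (latticeEmb N (Γ.ev e)) := by
  rw [← map_sub, ← Γ.ev_bounded e he, map_smul, smul_eq_mul]

lemma apply_ev_le_sum_unbounded (Φ : ℝ ⊗[ℤ] N →ₗ[ℝ] ℝ) {e₀ : Γ.E}
    (he₀ : ¬ Γ.inf (Γ.tgt e₀)) :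
    Φ (latticeEmb N (Γ.ev e₀)) ≤ ∑ e with Γ.inf (Γ.tgt e), |Φ (latticeEmb N (Γ.ev e))| := by
  set q : Γ.E → ℝ := fun e => Φ (latticeEmb N (Γ.ev e))
  set t := Φ (Γ.h (Γ.src e₀))
  set T : Finset Γ.V := {v | ¬ Γ.inf v ∧ Φ (Γ.h v) ≤ t}
  -- the net projected flow out of `T` along the edge `e`
  set c : Γ.E → ℝ := fun e =>
    (if Γ.src e ∈ T then q e else 0) - if Γ.tgt e ∈ T then q e else 0
  have hc : ∑ e, c e = 0 := by
    simp only [c, sum_sub_distrib, ← sum_filter, q]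
    rw [← map_sum Φ, ← map_sum Φ,
      Γ.sum_ev_src_mem_eq_sum_ev_tgt_mem T fun v hv => (mem_filter.1 hv).2.1, sub_self]
  have hbounded : ∀ e, ¬ Γ.inf (Γ.tgt e) → 0 ≤ c e := fun e he => by
    have hsrc : Γ.src e ∈ T ↔ Φ (Γ.h (Γ.src e)) ≤ t := by simp [T, Γ.src_finite e]
    have htgt : Γ.tgt e ∈ T ↔ Φ (Γ.h (Γ.tgt e)) ≤ t := by simp [T, he]
    have hslope := Γ.apply_h_tgt_sub_apply_h_src Φ he
    have hlen := Γ.len_pos e he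
    simp only [c, hsrc, htgt]
    split_ifs <;> nlinarith
  have hunbounded : ∀ e, Γ.inf (Γ.tgt e) → -|q e| ≤ c e := fun e he => by
    have htgt : Γ.tgt e ∉ T := by simp [T, he]
    simp only [c, htgt, if_false, sub_zero]
    split_ifs
    · exact neg_abs_le _
    · exact neg_nonpos.2 (abs_nonneg _)
  have hc₀ : q e₀ ≤ c e₀ := by
    rcases le_or_gt (q e₀) 0 with hq | hq
    · exact hq.trans (hbounded e₀ he₀)
    · have hsrc : Γ.src e₀ ∈ T := by simp [T, t, Γ.src_finite e₀]
      have htgt : Γ.tgt e₀ ∉ T := by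
        have := Γ.apply_h_tgt_sub_apply_h_src Φ he₀
        simp only [T, mem_filter, mem_univ, true_and, not_and, not_le]
        intro
        nlinarith [Γ.len_pos e₀ he₀]
      simp [c, hsrc, htgt]
  calc q e₀ ≤ c e₀ := hc₀
    _ ≤ ∑ e with ¬ Γ.inf (Γ.tgt e), c e :=
        single_le_sum (fun e he => hbounded e (mem_filter.1 he).2)
          (mem_filter.2 ⟨mem_univ _, he₀⟩)
    _ = -∑ e with Γ.inf (Γ.tgt e), c e := by
        rw [eq_neg_iff_add_eq_zero, add_comm, sum_filter_add_sum_filter_not, hc]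
    _ ≤ ∑ e with Γ.inf (Γ.tgt e), |q e| := by
        rw [neg_le, ← sum_neg_distrib]
        exact sum_le_sum fun e he => hunbounded e (mem_filter.1 he).2

lemma abs_apply_ev_le_sum_unbounded (Φ : ℝ ⊗[ℤ] N →ₗ[ℝ] ℝ) (e₀ : Γ.E) :
    |Φ (latticeEmb N (Γ.ev e₀))| ≤ ∑ e with Γ.inf (Γ.tgt e), |Φ (latticeEmb N (Γ.ev e))| := by
  by_cases he₀ : Γ.inf (Γ.tgt e₀)
  · exact single_le_sum (fun e _ => abs_nonneg (Φ (latticeEmb N (Γ.ev e))))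
      (mem_filter.2 ⟨mem_univ _, he₀⟩)
  · have hneg := Γ.apply_ev_le_sum_unbounded (-Φ) he₀
    simp only [LinearMap.neg_apply, abs_neg] at hneg
    exact abs_le.2 ⟨neg_le.1 hneg, Γ.apply_ev_le_sum_unbounded Φ he₀⟩

lemma card_filter_inf_tgt : #{e | Γ.inf (Γ.tgt e)} = #{v | Γ.inf v} := by
  rw [card_eq_sum_card_fiberwise (f := Γ.tgt) (t := {v | Γ.inf v})
    (fun e he => by simpa using he), card_eq_sum_ones]
  refine sum_congr rfl fun v hv => ?_
  have hv : Γ.inf v := (mem_filter.1 hv).2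
  rw [← Γ.inf_valency v hv, Nat.card_eq_fintype_card, Fintype.card_subtype,
    filter_filter, filter_comp_and_eq_filter (p := Γ.inf) hv]

lemma three_mul_card_finite_le (hst : Γ.Stable) :
    3 * #{v | ¬ Γ.inf v} ≤ Fintype.card Γ.E + #{e | ¬ Γ.inf (Γ.tgt e)} := by
  calc 3 * #{v | ¬ Γ.inf v}
      ≤ ∑ v with ¬ Γ.inf v, (#{e | Γ.src e = v} + #{e | Γ.tgt e = v}) := by
        rw [mul_comm, ← smul_eq_mul]
        refine card_nsmul_le_sum _ _ _ fun v hv => ?_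
        simpa only [Nat.card_eq_fintype_card, Fintype.card_subtype] using
          hst v (mem_filter.1 hv).2
    _ = Fintype.card Γ.E + #{e | ¬ Γ.inf (Γ.tgt e)} := by
        rw [sum_add_distrib, ← card_univ,
          card_eq_sum_card_fiberwise (f := Γ.src) (t := {v | ¬ Γ.inf v})
            fun e _ => by simpa using Γ.src_finite e,
          card_eq_sum_card_fiberwise (f := Γ.tgt) (t := {v | ¬ Γ.inf v})
            fun e he => by simpa using he]
        congr 1
        exact sum_congr rfl fun v hv => by
          rw [filter_filter,
            filter_comp_and_eq_filter (p := fun v => ¬ Γ.inf v) (mem_filter.1 hv).2]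

lemma card_le_of_stable {g r : ℕ} (hst : Γ.Stable) (hg : Γ.HasGenus g)
    (hr : Nat.card {v : Γ.V // Γ.inf v} < r) :
    Fintype.card Γ.V ≤ 2 * r + 2 * g ∧ Fintype.card Γ.E ≤ 2 * r + 3 * g := by
  rw [Nat.card_eq_fintype_card, Fintype.card_subtype] at hr
  have hV := card_filter_add_card_filter_not (s := univ) fun v => Γ.inf v
  have hE := card_filter_add_card_filter_not (s := univ) fun e => Γ.inf (Γ.tgt e)
  have hunb := Γ.card_filter_inf_tgt
  have hstab := Γ.three_mul_card_finite_le hst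
  rw [card_univ] at hV hE
  unfold HasGenus at hg
  omega

variable {ι : Type*} [Fintype ι] {n : ι → N} {dd : ι → ℕ}

lemma sum_abs_unbounded_le_of_hasDegree {M : Type*} [AddCommGroup M] [LinearOrder M]
    [IsOrderedAddMonoid M] (hdeg : Γ.HasDegree n dd) (f : N →+ M) :
    ∑ e with Γ.inf (Γ.tgt e), |f (Γ.ev e)| ≤ ∑ i, dd i • |f (n i)| := by
  set unbounded : Finset Γ.E := {e | Γ.inf (Γ.tgt e)}
  set U : ι → Finset Γ.E := fun i =>
    {e ∈ unbounded | ∃ c : ℕ, 0 < c ∧ Γ.ev e = (c : ℤ) • n i}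
  have hU : ∀ i, ∑ e ∈ U i, |f (Γ.ev e)| = dd i • |f (n i)| := fun i => by
    have hsum := hdeg.2 i
    rw [finsum_mem_eq_toFinset_sum, Set.toFinset_ofPred, ← filter_filter] at hsum
    rw [sum_abs_eq_abs_sum_of_forall_eq_nsmul (f (n i)), ← map_sum, ← hsum, natCast_zsmul,
      map_nsmul, abs_nsmul]
    intro e he
    obtain ⟨c, -, hc⟩ := (mem_filter.1 he).2
    exact ⟨c, by rw [hc, natCast_zsmul, map_nsmul]⟩
  calc ∑ e ∈ unbounded, |f (Γ.ev e)|
      ≤ ∑ e ∈ unbounded, ∑ i, if e ∈ U i then |f (Γ.ev e)| else 0 := by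
        refine sum_le_sum fun e he => ?_
        have hterm : ∀ i ∈ univ, 0 ≤ if e ∈ U i then |f (Γ.ev e)| else 0 := fun i _ => by
          split_ifs
          exacts [abs_nonneg _, le_rfl]
        rcases hdeg.1 e (mem_filter.1 he).2 with h0 | ⟨i, c, hc, hev⟩
        · exact (abs_eq_zero.2 (by rw [h0, map_zero])).trans_le (sum_nonneg hterm)
        · have hi : e ∈ U i := mem_filter.2 ⟨he, c, hc, hev⟩
          simpa only [hi, if_true] using single_le_sum hterm (mem_univ i)
    _ = ∑ i, ∑ e ∈ U i, |f (Γ.ev e)| := by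
        rw [sum_comm]
        exact sum_congr rfl fun i _ => by rw [sum_ite_mem, inter_eq_right.2 (filter_subset _ _)]
    _ = ∑ i, dd i • |f (n i)| := sum_congr rfl fun i _ => hU i

theorem abs_ev_le_of_hasDegree (hdeg : Γ.HasDegree n dd) (f : N →ₗ[ℤ] ℝ) (e : Γ.E) :
    |f (Γ.ev e)| ≤ ∑ i, dd i • |f (n i)| := by
  have hΦ : ∀ m, LinearMap.liftBaseChange ℝ f (latticeEmb N m) = f m := fun m =>
    (LinearMap.liftBaseChange_tmul ℝ f 1 m).trans (one_smul ℝ _)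
  calc |f (Γ.ev e)| ≤ ∑ e with Γ.inf (Γ.tgt e), |f (Γ.ev e)| := by
        simpa only [hΦ] using Γ.abs_apply_ev_le_sum_unbounded (LinearMap.liftBaseChange ℝ f) e
    _ ≤ ∑ i, dd i • |f (n i)| := Γ.sum_abs_unbounded_le_of_hasDegree hdeg f.toAddMonoidHom

end ParamTropCurve

theorem stmt_0_general (N : Type) [AddCommGroup N] [Module.Free ℤ N] [Module.Finite ℤ N]
    (g r : ℕ) {ι : Type} [Fintype ι] (n : ι → N) (dd : ι → ℕ) :
    ∃ L : List (LabeledGraph N), ∀ Γ : ParamTropCurve N,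
      Γ.Stable → Γ.HasGenus g → Γ.HasDegree n dd →
      Nat.card {v : Γ.V // Γ.inf v} < r →
      ∃ G ∈ L, Γ.ctype.Iso G := by
  set b := Module.Free.chooseBasis ℤ N
  have hbox := b.finite_setOf_abs_repr_le fun k => ∑ i, (dd i : ℤ) * |b.repr (n i) k|
  obtain ⟨L, hL⟩ := LabeledGraph.exists_list_iso_of_card_le (2 * r + 2 * g) (2 * r + 3 * g)
    (hbox.image AddSubgroup.zmultiples)
  refine ⟨L, fun Γ hst hg hdeg hr => ?_⟩
  obtain ⟨hV, hE⟩ := Γ.card_le_of_stable hst hg hr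
  refine hL Γ.ctype hV hE fun e => ⟨Γ.ev e, fun k => ?_, rfl⟩
  have hcoord := Γ.abs_ev_le_of_hasDegree hdeg (Algebra.linearMap ℤ ℝ ∘ₗ b.coord k) e
  simp only [LinearMap.comp_apply, Module.Basis.coord_apply, Algebra.linearMap_apply,
    eq_intCast, nsmul_eq_mul] at hcoord
  exact_mod_cast hcoord

/-- Lemma 2.6: Fix a lattice `N`, a genus `g`, a bound `r` and degree
data `(n i, dd i)` with the `n i` pairwise distinct primitive vectors of `N` and the
`dd i` positive integers.  Then there are only finitely many combinatorial types of
stable `N_ℝ`-parameterized tropical curves of genus `g` and of the given degree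
having fewer than `r` infinite vertices: there is a finite list of edge-labelled
graphs containing, up to isomorphism of labelled graphs, the combinatorial type of
every such curve. -/
theorem stmt_0 (N : Type) [AddCommGroup N] [Module.Free ℤ N] [Module.Finite ℤ N]
    (g r : ℕ) {ι : Type} [Fintype ι] (n : ι → N) (dd : ι → ℕ)
    (hinj : Function.Injective n) (hprim : ∀ i, IsPrimitiveVec (n i))
    (hdd : ∀ i, 0 < dd i) :
    ∃ L : List (LabeledGraph N), ∀ Γ : ParamTropCurve N,
      Γ.Stable → Γ.HasGenus g → Γ.HasDegree n dd →
      Nat.card {v : Γ.V // Γ.inf v} < r →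
      ∃ G ∈ L, Γ.ctype.Iso G :=
  stmt_0_general N g r n dd
end

section
/- Let V be a finite linearly ordered type, let E be a finite type, let s, t : E → V satisfy s(e) < t(e) for every e ∈ E, and let c : V → ℤ be a given function. Then the set of functions l : E → ℕ satisfying, for every v ∈ V, Σ_{e : t(e) = v} l(e) − Σ_{e : s(e) = v} l(e) = c(v), is finite. -/
/-- For an oriented multigraph on a finite linearly ordered vertex type
whose orientation is compatible with the order (`s e < t e` for every edge), and any
prescribed function `c : V → ℤ`, the set of functions `l : E → ℕ` satisfying the
balancing conditions `(Σ_{t e = v} l e) - (Σ_{s e = v} l e) = c v` at every vertex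
is finite. -/
theorem stmt_4 {V E : Type*} [Fintype V] [Fintype E] [LinearOrder V]
    (s t : E → V) (hst : ∀ e : E, s e < t e) (c : V → ℤ) :
    {l : E → ℕ | ∀ v : V,
      (∑ e ∈ Finset.univ.filter (fun e => t e = v), (l e : ℤ)) -
      (∑ e ∈ Finset.univ.filter (fun e => s e = v), (l e : ℤ)) = c v}.Finite := by
  classical
  set B : ℕ := (∑ v, |c v|).toNat with hBdef
  have habs : (0 : ℤ) ≤ ∑ v, |c v| := Finset.sum_nonneg fun v _ => abs_nonneg _
  apply Set.Finite.subset (Set.Finite.pi (fun e : E => Set.finite_Iic B))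
  intro l hl
  simp only [Set.mem_pi, Set.mem_univ, forall_true_left, Set.mem_Iic]
  intro e0
  set w := s e0 with hw
  -- sum the balancing conditions over vertices ≤ w
  have h1 : ∑ v ∈ Finset.univ.filter (· ≤ w),
      ((∑ e ∈ Finset.univ.filter (fun e => t e = v), (l e : ℤ)) -
       ∑ e ∈ Finset.univ.filter (fun e => s e = v), (l e : ℤ))
      = ∑ v ∈ Finset.univ.filter (· ≤ w), c v :=
    Finset.sum_congr rfl fun v _ => hl v
  rw [Finset.sum_sub_distrib,
    Finset.sum_fiberwise_eq_sum_filter _ _ t (fun e => (l e : ℤ)),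
    Finset.sum_fiberwise_eq_sum_filter _ _ s (fun e => (l e : ℤ))] at h1
  -- split the s-filter
  have hsplit : Finset.univ.filter (fun e => s e ∈ Finset.univ.filter (· ≤ w))
      = Finset.univ.filter (fun e => t e ∈ Finset.univ.filter (· ≤ w))
        ∪ Finset.univ.filter (fun e => s e ≤ w ∧ ¬ t e ≤ w) := by
    ext e
    simp only [Finset.mem_filter, Finset.mem_univ, true_and, Finset.mem_union]
    constructor
    · intro h
      by_cases ht : t e ≤ w
      · exact Or.inl ht
      · exact Or.inr ⟨h, ht⟩
    · rintro (h | ⟨h, _⟩)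
      · exact le_of_lt (lt_of_lt_of_le (hst e) h)
      · exact h
  have hdisj : Disjoint (Finset.univ.filter (fun e => t e ∈ Finset.univ.filter (· ≤ w)))
      (Finset.univ.filter (fun e => s e ≤ w ∧ ¬ t e ≤ w)) := by
    rw [Finset.disjoint_left]
    intro e he1 he2
    simp only [Finset.mem_filter, Finset.mem_univ, true_and] at he1 he2
    exact he2.2 he1
  rw [hsplit, Finset.sum_union hdisj] at h1
  have h2 : ∑ e ∈ Finset.univ.filter (fun e => s e ≤ w ∧ ¬ t e ≤ w), (l e : ℤ)
      = - ∑ v ∈ Finset.univ.filter (· ≤ w), c v := by linarith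
  have he0 : e0 ∈ Finset.univ.filter (fun e => s e ≤ w ∧ ¬ t e ≤ w) := by
    simp only [Finset.mem_filter, Finset.mem_univ, true_and, not_le]
    exact ⟨le_rfl, hw ▸ hst e0⟩
  have hle : (l e0 : ℤ) ≤ ∑ e ∈ Finset.univ.filter (fun e => s e ≤ w ∧ ¬ t e ≤ w), (l e : ℤ) :=
    Finset.single_le_sum (f := fun e => (l e : ℤ)) (fun e _ => by positivity) he0
  have hbound : - ∑ v ∈ Finset.univ.filter (· ≤ w), c v ≤ ∑ v, |c v| := by
    calc - ∑ v ∈ Finset.univ.filter (· ≤ w), c v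
        ≤ |∑ v ∈ Finset.univ.filter (· ≤ w), c v| := neg_le_abs _
      _ ≤ ∑ v ∈ Finset.univ.filter (· ≤ w), |c v| := Finset.abs_sum_le_sum_abs _ _
      _ ≤ ∑ v, |c v| := Finset.sum_le_sum_of_subset_of_nonneg
          (Finset.filter_subset _ _) (fun v _ _ => abs_nonneg _)
  rw [hBdef, Int.le_toNat habs]
  omega
end

section
/- Let k be an algebraically closed field of characteristic p > 0, let q = p^r for some r ≥ 1, and let α, β ∈ k be nonzero. Then the image of the map k → k × k, t ↦ (α·(t−1)^q, β·t·(t−1)), equals the affine plane curve {(X, Y) ∈ k × k : β^q·X² + α·β^q·X = α²·Y^q}. -/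
/-- Over an algebraically closed field `k` of characteristic `p > 0`,
with `q = p ^ r`, `r ≥ 1`, and nonzero `α, β`, the image of the map
`t ↦ (α (t-1)^q, β t (t-1))` from `k` to `k × k` is exactly the affine plane curve
`β^q X² + α β^q X = α² Y^q`. -/
theorem stmt_8 {k : Type*} [Field k] [IsAlgClosed k] (p : ℕ) (hp : p.Prime) [CharP k p]
    (r : ℕ) (hr : 1 ≤ r) (q : ℕ) (hq : q = p ^ r)
    (α β : k) (hα : α ≠ 0) (hβ : β ≠ 0) :
    (Set.range fun t : k => (α * (t - 1) ^ q, β * t * (t - 1))) =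
      {P : k × k | β ^ q * P.1 ^ 2 + α * β ^ q * P.1 = α ^ 2 * P.2 ^ q} := by
  have hq0 : 0 < q := hq ▸ pow_pos hp.pos r
  have hEF : Fact p.Prime := ⟨hp⟩
  ext P
  constructor
  · rintro ⟨t, rfl⟩
    simp only [Set.mem_setOf_eq]
    have key : (t * (t - 1)) ^ q = ((t - 1) ^ q) ^ 2 + (t - 1) ^ q := by
      have h1 : t * (t - 1) = (t - 1) ^ 2 + (t - 1) := by ring
      rw [h1, hq, add_pow_char_pow, pow_right_comm]
    rw [show β * t * (t - 1) = β * (t * (t - 1)) by ring, mul_pow β (t * (t - 1)) q, key]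
    ring
  · intro hP
    obtain ⟨X, Y⟩ := P
    simp only [Set.mem_setOf_eq] at hP
    obtain ⟨s, hs⟩ := IsAlgClosed.exists_pow_nat_eq (X / α) hq0
    have hX : α * s ^ q = X := by rw [hs]; field_simp
    refine ⟨s + 1, ?_⟩
    have hYq : (β * (s + 1) * s) ^ q = Y ^ q := by
      have h1 : β * (s + 1) * s = β * (s ^ 2 + s) := by ring
      have h2 : (β * (s ^ 2 + s)) ^ q = β ^ q * ((s ^ q) ^ 2 + s ^ q) := by
        rw [mul_pow, hq, add_pow_char_pow, pow_right_comm]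
      have hα2 : (α : k) ^ 2 ≠ 0 := pow_ne_zero _ hα
      have : α ^ 2 * (β * (s + 1) * s) ^ q = α ^ 2 * Y ^ q := by
        rw [h1, h2, ← hP, ← hX]
        ring
      exact mul_left_cancel₀ hα2 this
    have hY : β * (s + 1) * s = Y := by
      have h3 : (β * (s + 1) * s - Y) ^ q = 0 := by
        rw [hq, sub_pow_char_pow, ← hq, hYq, sub_self]
      exact sub_eq_zero.mp (pow_eq_zero_iff hq0.ne' |>.mp h3)
    simp only [Prod.mk.injEq]
    constructor
    · have : (s + 1) - 1 = s := by ring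
      rw [this, hX]
    · rw [show β * (s + 1) * ((s + 1) - 1) = β * (s + 1) * s by ring, hY]
end
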